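/- arXiv:2010.12577 — 4 statements merged into one kernel-verified Lean document; each statement's English description precedes it below -/
import Mathlib

section
/- The function V̂(u) = u + (pλb − c)·t·(1 − e^{ρ* u}), where ρ* < 0 solves −cρ + pλ(e^{bρ} − 1) = 1/t, satisfies the advanced functional differential equation c·V̂′(u) + (1/t + pλ)·V̂(u) − pλ·V̂(u + b) − u/t = 0 for all u ≥ 0, with boundary condition V̂(0) = 0. -/
theorem value_function_satisfies_advanced_ode
    (c b lam p t : ℝ) (hc : 0 < c) (hb : 0 < b) (hlam : 0 < lam) (ht : 0 < t)
    (hp : p ∈ Set.Ioo (0:ℝ) 1)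
    (ρ : ℝ) (hρneg : ρ < 0)
    (hρroot : -c * ρ + p * lam * (Real.exp (b * ρ) - 1) = 1 / t)
    (V : ℝ → ℝ)
    (hV : ∀ u, V u = u + (p * lam * b - c) * t * (1 - Real.exp (ρ * u))) :
    (∀ u : ℝ, 0 ≤ u →
      c * deriv V u + (1 / t + p * lam) * V u - p * lam * V (u + b) - u / t = 0) ∧
    V 0 = 0 := by
  have hVfun : V = fun u => u + (p * lam * b - c) * t * (1 - Real.exp (ρ * u)) :=
    funext hV
  constructor
  · intro u hu
    have hd : HasDerivAt (fun u => u + (p * lam * b - c) * t * (1 - Real.exp (ρ * u)))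
        (1 + (p * lam * b - c) * t * (0 - Real.exp (ρ * u) * ρ)) u := by
      have h1 : HasDerivAt (fun u : ℝ => ρ * u) ρ u := by
        simpa using (hasDerivAt_id u).const_mul ρ
      exact (hasDerivAt_id u).add
        (((hasDerivAt_const u (1:ℝ)).sub h1.exp).const_mul ((p * lam * b - c) * t))
    have hderiv : deriv V u = 1 + (p * lam * b - c) * t * (0 - Real.exp (ρ * u) * ρ) := by
      rw [hVfun]; exact hd.deriv
    rw [hderiv, hV u, hV (u + b)]
    have hx : Real.exp (ρ * (u + b)) = Real.exp (ρ * u) * Real.exp (b * ρ) := by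
      rw [← Real.exp_add]; ring_nf
    rw [hx]
    have ht' : t ≠ 0 := ne_of_gt ht
    have h2 : (-c * ρ + p * lam * (Real.exp (b * ρ) - 1)) * t = 1 := by
      rw [hρroot]; field_simp
    field_simp
    linear_combination (Real.exp (ρ * u) * (p * lam * b - c) * t) * h2
  · rw [hV 0]; simp
end

section
/- For all p ∈ (0,1) and q ∈ [0,1], the selfish miner's expected reward rate coefficient satisfies (qp(1−p)² + 4p² − 2p³)/(1 + 2p − p²) ≤ p, with equality if and only if q = 1. -/
theorem selfish_reward_rate_le_fair_share
    (p q : ℝ) (hp : p ∈ Set.Ioo (0:ℝ) 1) (hq : q ∈ Set.Icc (0:ℝ) 1) :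
    (q * p * (1 - p) ^ 2 + 4 * p ^ 2 - 2 * p ^ 3) / (1 + 2 * p - p ^ 2) ≤ p ∧
    ((q * p * (1 - p) ^ 2 + 4 * p ^ 2 - 2 * p ^ 3) / (1 + 2 * p - p ^ 2) = p ↔ q = 1) := by
  obtain ⟨hp0, hp1⟩ := hp
  obtain ⟨hq0, hq1⟩ := hq
  have hD : (0:ℝ) < 1 + 2 * p - p ^ 2 := by nlinarith
  constructor
  · rw [div_le_iff₀ hD]
    nlinarith [mul_nonneg (mul_nonneg hp0.le (sq_nonneg (1 - p))) (sub_nonneg.2 hq1)]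
  · rw [div_eq_iff hD.ne']
    constructor
    · intro h
      have hkey : p * (1 - p) ^ 2 * (1 - q) = 0 := by nlinarith
      have h1 : (1 - p) ^ 2 ≠ 0 := pow_ne_zero _ (by linarith)
      have := mul_eq_zero.1 hkey
      rcases this with h2 | h2
      · rcases mul_eq_zero.1 h2 with h3 | h3
        · linarith
        · exact absurd h3 h1
      · linarith
    · intro h; subst h; ring
end

section
/- With the constants D_4, D_5, D_6, D_7 defined as D_4 = c³/(λ²(1−p)p), D_5 = c²(3 + λt(p+2))/(λ²t(1−p)p), D_6 = (3 + λt(2p+1))c(λt+1)/(t²λ²(1−p)p), D_7 = (1 + λt(p+2) + λ²t²(2p+1) + λ³t³p(p(1−q)(2−p) + q))/(λ²t³(1−p)p), the cubic polynomial f(ρ) = D_4ρ³ + D_5ρ² + D_6ρ + D_7 satisfies D_4D_7 < D_5D_6 for all λ, c, t > 0 and p, q ∈ (0,1). -/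
theorem D_coefficients_inequality
    (lam c t p q : ℝ) (hlam : 0 < lam) (hc : 0 < c) (ht : 0 < t)
    (hp : p ∈ Set.Ioo (0:ℝ) 1) (hq : q ∈ Set.Ioo (0:ℝ) 1)
    (D4 D5 D6 D7 : ℝ)
    (hD4 : D4 = c ^ 3 / (lam ^ 2 * (1 - p) * p))
    (hD5 : D5 = c ^ 2 * (3 + lam * t * (p + 2)) / (lam ^ 2 * t * (1 - p) * p))
    (hD6 : D6 = (3 + lam * t * (2 * p + 1)) * c * (lam * t + 1) / (t ^ 2 * lam ^ 2 * (1 - p) * p))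
    (hD7 : D7 = (1 + lam * t * (p + 2) + lam ^ 2 * t ^ 2 * (2 * p + 1)
        + lam ^ 3 * t ^ 3 * p * (p * (1 - q) * (2 - p) + q)) / (lam ^ 2 * t ^ 3 * (1 - p) * p)) :
    D4 * D7 < D5 * D6 := by
  obtain ⟨hp0, hp1⟩ := hp
  obtain ⟨hq0, hq1⟩ := hq
  have h1p : 0 < 1 - p := by linarith
  have h1q : 0 < 1 - q := by linarith
  subst hD4 hD5 hD6 hD7
  rw [div_mul_div_comm, div_mul_div_comm]
  have hden : lam ^ 2 * (1 - p) * p * (lam ^ 2 * t ^ 3 * (1 - p) * p)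
      = lam ^ 2 * t * (1 - p) * p * (t ^ 2 * lam ^ 2 * (1 - p) * p) := by ring
  rw [hden, div_lt_div_iff_of_pos_right (by positivity : (0:ℝ) < lam ^ 2 * t * (1 - p) * p * (t ^ 2 * lam ^ 2 * (1 - p) * p))]
  have hx : 0 < lam * t := by positivity
  have hcub : p * (p * (1 - q) * (2 - p) + q) < 2 * p := by
    nlinarith [mul_pos hq0 (mul_pos hp0 h1p), mul_pos h1q (mul_pos h1p h1p)]
  have hc3 : 0 < c ^ 3 := by positivity
  nlinarith [mul_pos (mul_pos hx hx) hx, mul_pos hx hx,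
    mul_pos hc3 (mul_pos (mul_pos hx hx) hx),
    mul_lt_mul_of_pos_left hcub (mul_pos hc3 (mul_pos (mul_pos hx hx) hx)),
    mul_pos hc3 hx, mul_pos hc3 (mul_pos hx hx),
    mul_pos (mul_pos hc3 (mul_pos hx hx)) hp0,
    mul_pos (mul_pos hc3 hx) hp0,
    mul_pos (mul_pos hc3 (mul_pos (mul_pos hx hx) hx)) (mul_pos hp0 hp0)]
end

section
/- The derivative of the cubic f(ρ) = D_4ρ³ + D_5ρ² + D_6ρ + D_7 (with D_4,...,D_7 as in the selfish mining characteristic equation) has two negative real roots r_1 = −1/(ct) − λ/c and r_2 = −1/(ct) − λ(2p+1)/(3c), and f(r_1) = −(1−q)(1−p)λ ≤ 0 and f(r_2) = −((−27pq + 23p + 4)(1−p)λ)/(27p) ≤ 0. -/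
/-!
The substitution `σ = (c ρ + 1/t) / λ` turns `f` into `λ / ((1 - p) p)` times the cubic
`σ³ + (p + 2) σ² + (2p + 1) σ + p (p (1 - q) (2 - p) + q)`, in which `c` and `t` no longer
appear. Its derivative factors as `(σ + 1) (3σ + 2p + 1)`, and `r₁`, `r₂` are the points
where `σ = -1` and `σ = -(2p + 1)/3`.
-/

def reducedCubic (p q σ : ℝ) : ℝ :=
  σ ^ 3 + (p + 2) * σ ^ 2 + (2 * p + 1) * σ + p * (p * (1 - q) * (2 - p) + q)

namespace reducedCubic

variable (p q : ℝ)

theorem hasDerivAt (σ : ℝ) :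
    HasDerivAt (reducedCubic p q) ((σ + 1) * (3 * σ + (2 * p + 1))) σ := by
  have h := ((((hasDerivAt_pow 3 σ).add ((hasDerivAt_pow 2 σ).const_mul (p + 2))).add
    ((hasDerivAt_id σ).const_mul (2 * p + 1))).add_const (p * (p * (1 - q) * (2 - p) + q)))
  exact h.congr_deriv (by push_cast; ring)

theorem hasDerivAt_neg_one : HasDerivAt (reducedCubic p q) 0 (-1) := by
  simpa using hasDerivAt p q (-1)

theorem hasDerivAt_second_root : HasDerivAt (reducedCubic p q) 0 (-(2 * p + 1) / 3) := by
  convert hasDerivAt p q (-(2 * p + 1) / 3) using 1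
  ring

theorem eval_neg_one : reducedCubic p q (-1) = -(p * (1 - q) * (1 - p) ^ 2) := by
  unfold reducedCubic
  ring

theorem eval_second_root :
    reducedCubic p q (-(2 * p + 1) / 3) = -((1 - p) ^ 2 * (-27 * p * q + 23 * p + 4)) / 27 := by
  unfold reducedCubic
  ring

end reducedCubic

theorem deriv_const_mul_comp_affine_of_hasDerivAt_zero {g : ℝ → ℝ} {K a b ρ : ℝ}
    (hg : HasDerivAt g 0 (a * ρ + b)) : deriv (fun x => K * g (a * x + b)) ρ = 0 := by
  have h := (hg.comp ρ (((hasDerivAt_id ρ).const_mul a).add_const b)).const_mul K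
  simpa using h.deriv

theorem cubic_eq_lam_mul_reducedCubic {lam t p : ℝ} (c q ρ : ℝ)
    (hlam : lam ≠ 0) (ht : t ≠ 0) (hp0 : p ≠ 0) (hp1 : 1 - p ≠ 0) :
    c ^ 3 / (lam ^ 2 * (1 - p) * p) * ρ ^ 3
      + c ^ 2 * (3 + lam * t * (p + 2)) / (lam ^ 2 * t * (1 - p) * p) * ρ ^ 2
      + (3 + lam * t * (2 * p + 1)) * c * (lam * t + 1) / (t ^ 2 * lam ^ 2 * (1 - p) * p) * ρ
      + (1 + lam * t * (p + 2) + lam ^ 2 * t ^ 2 * (2 * p + 1)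
        + lam ^ 3 * t ^ 3 * p * (p * (1 - q) * (2 - p) + q)) / (lam ^ 2 * t ^ 3 * (1 - p) * p)
      = lam / ((1 - p) * p) * reducedCubic p q (c / lam * ρ + 1 / (t * lam)) := by
  rw [reducedCubic]
  field_simp
  ring

theorem cubic_derivative_roots_and_values
    (lam c t p q : ℝ) (hlam : 0 < lam) (hc : 0 < c) (ht : 0 < t)
    (hp : p ∈ Set.Ioo (0:ℝ) 1) (hq : q ∈ Set.Icc (0:ℝ) 1)
    (D4 D5 D6 D7 : ℝ)
    (hD4 : D4 = c ^ 3 / (lam ^ 2 * (1 - p) * p))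
    (hD5 : D5 = c ^ 2 * (3 + lam * t * (p + 2)) / (lam ^ 2 * t * (1 - p) * p))
    (hD6 : D6 = (3 + lam * t * (2 * p + 1)) * c * (lam * t + 1) / (t ^ 2 * lam ^ 2 * (1 - p) * p))
    (hD7 : D7 = (1 + lam * t * (p + 2) + lam ^ 2 * t ^ 2 * (2 * p + 1)
        + lam ^ 3 * t ^ 3 * p * (p * (1 - q) * (2 - p) + q)) / (lam ^ 2 * t ^ 3 * (1 - p) * p))
    (f : ℝ → ℝ) (hf : ∀ ρ, f ρ = D4 * ρ ^ 3 + D5 * ρ ^ 2 + D6 * ρ + D7)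
    (r1 r2 : ℝ)
    (hr1 : r1 = -(1 / (c * t)) - lam / c)
    (hr2 : r2 = -(1 / (c * t)) - lam * (2 * p + 1) / (3 * c)) :
    r1 < 0 ∧ r2 < 0 ∧ r1 < r2 ∧
    deriv f r1 = 0 ∧ deriv f r2 = 0 ∧
    f r1 = -((1 - q) * (1 - p) * lam) ∧ f r1 ≤ 0 ∧
    f r2 = -((-27 * p * q + 23 * p + 4) * (1 - p) * lam) / (27 * p) ∧ f r2 ≤ 0 := by
  obtain ⟨hp0, hp1⟩ := hp
  obtain ⟨-, hq1⟩ := hq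
  have h1p : 0 < 1 - p := by linarith
  have hf_eq : f = fun ρ => lam / ((1 - p) * p) *
      reducedCubic p q (c / lam * ρ + 1 / (t * lam)) := funext fun ρ => by
    rw [hf, hD4, hD5, hD6, hD7]
    exact cubic_eq_lam_mul_reducedCubic c q ρ hlam.ne' ht.ne' hp0.ne' h1p.ne'
  have hσ1 : c / lam * r1 + 1 / (t * lam) = -1 := by rw [hr1]; field_simp; ring
  have hσ2 : c / lam * r2 + 1 / (t * lam) = -(2 * p + 1) / 3 := by rw [hr2]; field_simp; ring
  have hfr1 : f r1 = -((1 - q) * (1 - p) * lam) := by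
    simp only [hf_eq, hσ1, reducedCubic.eval_neg_one]; field_simp
  have hfr2 : f r2 = -((-27 * p * q + 23 * p + 4) * (1 - p) * lam) / (27 * p) := by
    simp only [hf_eq, hσ2, reducedCubic.eval_second_root]; field_simp
  have hr12 : r1 < r2 := by
    rw [hr1, hr2, sub_lt_sub_iff_left, div_lt_div_iff₀ (by positivity) hc]
    nlinarith [mul_pos hlam hc]
  have hr2_neg : r2 < 0 := by
    rw [hr2]
    linarith [show 0 < lam * (2 * p + 1) / (3 * c) by positivity, show 0 < 1 / (c * t) by positivity]
  refine ⟨hr12.trans hr2_neg, hr2_neg, hr12, ?_, ?_, hfr1, ?_, hfr2, ?_⟩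
  · rw [hf_eq]
    exact deriv_const_mul_comp_affine_of_hasDerivAt_zero (hσ1 ▸ reducedCubic.hasDerivAt_neg_one p q)
  · rw [hf_eq]
    exact deriv_const_mul_comp_affine_of_hasDerivAt_zero
      (hσ2 ▸ reducedCubic.hasDerivAt_second_root p q)
  · rw [hfr1]
    nlinarith [mul_pos h1p hlam]
  · have hcoef : 0 < -27 * p * q + 23 * p + 4 := by nlinarith
    rw [hfr2, neg_div, neg_nonpos]
    positivity
end
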